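/- arXiv:2305.02165 — 5 statements merged into one kernel-verified Lean document; each statement's English description precedes it below -/
import Mathlib

section
/- Let L(x, λ) be convex in x and concave in λ, and let P be a symmetric positive semi-definite matrix on R^{n+m}. Suppose iterates z^k = (x^k, λ^k) satisfy P(z^k - z^{k+1}) ∈ F(z^{k+1}), where F(x, λ) = (∂_x L(x, λ), -∂_λ L(x, λ)). Then for any fixed (x, λ) and each k ≥ 0: L(x^{k+1}, λ) - L(x, λ^{k+1}) ≤ (1/2)‖z^k - z‖²_P - (1/2)‖z^{k+1} - z‖²_P. -/
open Matrix

/-- `g` is a subgradient of `f` at `x`. -/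
def IsSubgradAt {ι : Type*} [Fintype ι] (f : (ι → ℝ) → ℝ) (x g : ι → ℝ) : Prop :=
  ∀ y, f x + g ⬝ᵥ (y - x) ≤ f y

/-!
Write `z = (x, λ)` and `w = P (z^k - z^{k+1})`. Adding the subgradient inequalities in `x` and in
`λ` at `z^{k+1}` bounds the saddle gap `L(x^{k+1}, λ) - L(x, λ^{k+1})` by `⟨w, z^{k+1} - z⟩`.
Expanding `‖z^k - z‖²_P` around `z^{k+1}` shows that twice this inner product equals
`‖z^k - z‖²_P - ‖z^{k+1} - z‖²_P - ‖z^k - z^{k+1}‖²_P`, and the last term is nonnegative.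
-/

theorem saddle_gap_le_of_isSubgradAt {ι κ : Type*} [Fintype ι] [Fintype κ]
    (L : (ι → ℝ) → (κ → ℝ) → ℝ) (x' x : ι → ℝ) (l' l : κ → ℝ) (w : ι ⊕ κ → ℝ)
    (hx : IsSubgradAt (fun x => L x l') x' (fun i => w (Sum.inl i)))
    (hl : IsSubgradAt (fun l => -L x' l) l' (fun j => w (Sum.inr j))) :
    L x' l - L x l' ≤ w ⬝ᵥ (Sum.elim x' l' - Sum.elim x l) := by
  have hsplit : w ⬝ᵥ (Sum.elim x' l' - Sum.elim x l)
      = -((fun i => w (Sum.inl i)) ⬝ᵥ (x - x') + (fun j => w (Sum.inr j)) ⬝ᵥ (l - l')) := by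
    rw [← Sum.elim_comp_inl_inr w, ← Sum.elim_sub_sub, sumElim_dotProduct_sumElim,
      neg_add, ← dotProduct_neg, ← dotProduct_neg, neg_sub, neg_sub]
    rfl
  have hx' := hx x
  have hl' := hl l
  simp only at hx' hl'
  linarith

namespace Matrix

variable {ι R : Type*} [Fintype ι] [CommRing R] {P : Matrix ι ι R}

theorem IsSymm.dotProduct_mulVec_comm (hP : P.IsSymm) (u v : ι → R) :
    u ⬝ᵥ (P *ᵥ v) = v ⬝ᵥ (P *ᵥ u) := by
  rw [dotProduct_mulVec, ← mulVec_transpose, hP.eq, dotProduct_comm]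

theorem IsSymm.dotProduct_mulVec_sub_add_sub (hP : P.IsSymm) (a b c : ι → R) :
    (a - c) ⬝ᵥ (P *ᵥ (a - c))
      = (a - b) ⬝ᵥ (P *ᵥ (a - b)) + (b - c) ⬝ᵥ (P *ᵥ (b - c))
        + 2 * ((P *ᵥ (a - b)) ⬝ᵥ (b - c)) := by
  have hac : a - c = (a - b) + (b - c) := by abel
  rw [hac, mulVec_add, dotProduct_add, add_dotProduct, add_dotProduct,
    hP.dotProduct_mulVec_comm (a - b) (b - c), dotProduct_comm (P *ᵥ (a - b))]
  ring

end Matrix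

theorem Matrix.PosSemidef.mulVec_sub_dotProduct_sub_le {ι : Type*} [Fintype ι]
    {P : Matrix ι ι ℝ} (hP : P.PosSemidef) (a b c : ι → ℝ) :
    (P *ᵥ (a - b)) ⬝ᵥ (b - c)
      ≤ (1/2) * ((a - c) ⬝ᵥ (P *ᵥ (a - c))) - (1/2) * ((b - c) ⬝ᵥ (P *ᵥ (b - c))) := by
  have hsymm : P.IsSymm := isHermitian_iff_isSymm.mp hP.isHermitian
  have hnonneg : 0 ≤ (a - b) ⬝ᵥ (P *ᵥ (a - b)) := by
    simpa using hP.dotProduct_mulVec_nonneg (a - b)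
  rw [hsymm.dotProduct_mulVec_sub_add_sub a b c]
  linarith

/-- One step of the generic update `P(z^k - z^{k+1}) ∈ F(z^{k+1})` satisfies
`L(x^{k+1},λ) - L(x,λ^{k+1}) ≤ ½‖z^k-z‖²_P - ½‖z^{k+1}-z‖²_P`. -/
theorem one_step_generic {n m : ℕ} (L : (Fin n → ℝ) → (Fin m → ℝ) → ℝ)
    (P : Matrix (Fin n ⊕ Fin m) (Fin n ⊕ Fin m) ℝ) (hP : P.PosSemidef)
    (xk xk1 : Fin n → ℝ) (lk lk1 : Fin m → ℝ)
    (hgx : IsSubgradAt (fun x => L x lk1) xk1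
      (fun i => (P *ᵥ (Sum.elim xk lk - Sum.elim xk1 lk1)) (Sum.inl i)))
    (hgl : IsSubgradAt (fun l => -L xk1 l) lk1
      (fun j => (P *ᵥ (Sum.elim xk lk - Sum.elim xk1 lk1)) (Sum.inr j)))
    (x : Fin n → ℝ) (lam : Fin m → ℝ) :
    L xk1 lam - L x lk1
      ≤ (1/2) * ((Sum.elim xk lk - Sum.elim x lam) ⬝ᵥ (P *ᵥ (Sum.elim xk lk - Sum.elim x lam)))
        - (1/2) * ((Sum.elim xk1 lk1 - Sum.elim x lam)
            ⬝ᵥ (P *ᵥ (Sum.elim xk1 lk1 - Sum.elim x lam))) :=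
  (saddle_gap_le_of_isSubgradAt L xk1 x lk1 lam _ hgx hgl).trans
    (hP.mulVec_sub_dotProduct_sub_le _ _ _)
end

section
/- Consider ADMM for min f(x) + g(y) s.t. Ax + By = b, with updates y^{k+1} = argmin_y { g(y) - ⟨Bᵀλ^k, y⟩ + (η/2)‖Ax^k + By - b‖² }, λ^{k+1} = λ^k - η(Ax^k + By^{k+1} - b), x^{k+1} = argmin_x { f(x) - ⟨Aᵀλ^{k+1}, x⟩ + (η/2)‖Ax + By^{k+1} - b‖² }. Then with z = (y, x, λ) and F(z) = (∂g(y) - Bᵀλ, ∂f(x) - Aᵀλ, Ax + By - b), the iterates satisfy P(z^k - z^{k+1}) ∈ F(z^{k+1}) where P = [[0,0,0],[0, ηAᵀA, -Aᵀ],[0, -A, (1/η)I]]. -/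
/-!
Each ADMM subproblem minimises a convex function plus a smooth quadratic, so at its minimiser
the first-order condition holds: minus the gradient of the quadratic is a subgradient of the
convex part. This follows by comparing the minimiser `x₀` with `x₀ + t • (y - x₀)`, using
convexity along the segment, dividing by `t` and letting `t → 0⁺`. Substituting the dual update
`λᵏ⁺¹ = λᵏ - η (A xᵏ + B yᵏ⁺¹ - b)` into the two optimality conditions gives the three rows of
`P (zᵏ - zᵏ⁺¹) ∈ F (zᵏ⁺¹)`; the first row is `0` because the `y`-condition already involves
`Bᵀ λᵏ⁺¹`.
-/

open Matrix

open Set Filter Topology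

theorem dotProduct_add_smul_self {ι R : Type*} [Fintype ι] [CommRing R] (u v : ι → R) (t : R) :
    (u + t • v) ⬝ᵥ (u + t • v) = u ⬝ᵥ u + 2 * t * (u ⬝ᵥ v) + t ^ 2 * (v ⬝ᵥ v) := by
  simp only [add_dotProduct, dotProduct_add, smul_dotProduct, dotProduct_smul, smul_eq_mul,
    dotProduct_comm v u]
  ring

theorem ConvexOn.apply_add_smul_sub_le {E : Type*} [AddCommGroup E] [Module ℝ E] {s : Set E}
    {g : E → ℝ} (hg : ConvexOn ℝ s g) {x y : E} (hx : x ∈ s) (hy : y ∈ s) {t : ℝ}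
    (ht : t ∈ Icc (0 : ℝ) 1) : g (x + t • (y - x)) ≤ g x + t * (g y - g x) := by
  have h := hg.2 hx hy (sub_nonneg.2 ht.2) ht.1 (sub_add_cancel 1 t)
  rw [show x + t • (y - x) = (1 - t) • x + t • y by module]
  simp only [smul_eq_mul] at h
  linarith

theorem nonpos_of_forall_le_mul {a C : ℝ} (h : ∀ t ∈ Ioc (0 : ℝ) 1, a ≤ t * C) : a ≤ 0 := by
  have hlim : Tendsto (fun t : ℝ => t * C) (𝓝[>] 0) (𝓝 0) := by
    refine ((continuous_id.mul continuous_const).tendsto' 0 0 ?_).mono_left nhdsWithin_le_nhds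
    simp
  exact ge_of_tendsto hlim (eventually_of_mem (Ioc_mem_nhdsGT zero_lt_one) h)

theorem isSubgradAt_of_minimizer_add_quadratic {ι κ : Type*} [Fintype ι] [Fintype κ]
    {g : (ι → ℝ) → ℝ} (hg : ConvexOn ℝ univ g) {c : ι → ℝ} {M : Matrix κ ι ℝ} {d : κ → ℝ}
    {η : ℝ} {x₀ : ι → ℝ}
    (hmin : ∀ y, g x₀ - c ⬝ᵥ x₀ + (η / 2) * ((M *ᵥ x₀ + d) ⬝ᵥ (M *ᵥ x₀ + d))
      ≤ g y - c ⬝ᵥ y + (η / 2) * ((M *ᵥ y + d) ⬝ᵥ (M *ᵥ y + d))) :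
    IsSubgradAt g x₀ (c - η • (Mᵀ *ᵥ (M *ᵥ x₀ + d))) := by
  intro y
  set u := M *ᵥ x₀ + d
  set v := M *ᵥ (y - x₀)
  have hslope : (c - η • (Mᵀ *ᵥ u)) ⬝ᵥ (y - x₀) = c ⬝ᵥ (y - x₀) - η * (u ⬝ᵥ v) := by
    rw [sub_dotProduct, smul_dotProduct, smul_eq_mul, mulVec_transpose, ← dotProduct_mulVec]
  suffices g x₀ + c ⬝ᵥ (y - x₀) - η * (u ⬝ᵥ v) - g y ≤ 0 by rw [hslope]; linarith
  refine nonpos_of_forall_le_mul (C := η / 2 * (v ⬝ᵥ v)) fun t ht => ?_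
  have hconv := hg.apply_add_smul_sub_le (mem_univ x₀) (mem_univ y) (Ioc_subset_Icc_self ht)
  have hres : M *ᵥ (x₀ + t • (y - x₀)) + d = u + t • v := by
    rw [mulVec_add, mulVec_smul, add_right_comm]
  have hmin_t := hmin (x₀ + t • (y - x₀))
  rw [hres, dotProduct_add_smul_self, dotProduct_add c, dotProduct_smul, smul_eq_mul] at hmin_t
  exact le_of_mul_le_mul_left (by nlinarith) ht.1

/-- ADMM is an instance of the generic update `P(z^k - z^{k+1}) ∈ F(z^{k+1})` with
`z = (y, x, λ)` and `P = [[0,0,0],[0, ηAᵀA, -Aᵀ],[0, -A, (1/η)I]]`. -/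
theorem admm_is_generic {p n m : ℕ} (f : (Fin n → ℝ) → ℝ) (g : (Fin p → ℝ) → ℝ)
    (hf : ConvexOn ℝ Set.univ f) (hg : ConvexOn ℝ Set.univ g)
    (A : Matrix (Fin m) (Fin n) ℝ) (B : Matrix (Fin m) (Fin p) ℝ) (b : Fin m → ℝ)
    (η : ℝ) (hη : 0 < η)
    (yk yk1 : Fin p → ℝ) (xk xk1 : Fin n → ℝ) (lk lk1 : Fin m → ℝ)
    (hy : ∀ y, g yk1 - (Bᵀ *ᵥ lk) ⬝ᵥ yk1
        + (η/2) * ((A *ᵥ xk + B *ᵥ yk1 - b) ⬝ᵥ (A *ᵥ xk + B *ᵥ yk1 - b))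
      ≤ g y - (Bᵀ *ᵥ lk) ⬝ᵥ y
        + (η/2) * ((A *ᵥ xk + B *ᵥ y - b) ⬝ᵥ (A *ᵥ xk + B *ᵥ y - b)))
    (hlam : lk1 = lk - η • (A *ᵥ xk + B *ᵥ yk1 - b))
    (hx : ∀ x, f xk1 - (Aᵀ *ᵥ lk1) ⬝ᵥ xk1
        + (η/2) * ((A *ᵥ xk1 + B *ᵥ yk1 - b) ⬝ᵥ (A *ᵥ xk1 + B *ᵥ yk1 - b))
      ≤ f x - (Aᵀ *ᵥ lk1) ⬝ᵥ x
        + (η/2) * ((A *ᵥ x + B *ᵥ yk1 - b) ⬝ᵥ (A *ᵥ x + B *ᵥ yk1 - b))) :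
    ∃ gg gf, IsSubgradAt g yk1 gg ∧ IsSubgradAt f xk1 gf ∧
      (fromBlocks (0 : Matrix (Fin p) (Fin p) ℝ) (0 : Matrix (Fin p) (Fin n ⊕ Fin m) ℝ)
          (0 : Matrix (Fin n ⊕ Fin m) (Fin p) ℝ)
          (fromBlocks (η • (Aᵀ * A)) (-Aᵀ) (-A) ((1/η) • (1 : Matrix (Fin m) (Fin m) ℝ))))
        *ᵥ (Sum.elim yk (Sum.elim xk lk) - Sum.elim yk1 (Sum.elim xk1 lk1))
      = Sum.elim (gg - Bᵀ *ᵥ lk1)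
          (Sum.elim (gf - Aᵀ *ᵥ lk1) (A *ᵥ xk1 + B *ᵥ yk1 - b)) := by
  simp_rw [add_comm (A *ᵥ xk), add_sub_assoc] at hy hlam
  simp_rw [add_sub_assoc] at hx
  refine ⟨_, _, isSubgradAt_of_minimizer_add_quadratic hg hy,
    isSubgradAt_of_minimizer_add_quadratic hf hx, ?_⟩
  have hdual : lk - lk1 = η • (B *ᵥ yk1 + (A *ᵥ xk - b)) := by rw [hlam]; abel
  simp only [← Sum.elim_sub_sub, fromBlocks_mulVec, Sum.elim_comp_inl, Sum.elim_comp_inr,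
    zero_mulVec, zero_add, hdual]
  congr 2
  · rw [hlam]; simp only [mulVec_sub, mulVec_smul]; module
  · simp only [neg_mulVec, smul_mulVec, ← mulVec_mulVec, mulVec_sub, mulVec_add, mulVec_smul]
    module
  · rw [smul_mulVec, one_mulVec, smul_smul, one_div, inv_mul_cancel₀ hη.ne', one_smul, neg_mulVec,
      mulVec_sub]
    abel
end

section
/- Ergodic rate of PDHG: with 0 < η ≤ 1/‖A‖₂ and L(x,λ) = f(x) - λᵀAx - g*(λ), the PDHG ergodic averages satisfy L(x̄^k, λ) - L(x, λ̄^k) ≤ ‖z - z^0‖²_P / (2k), where P = [[ (1/η)I, Aᵀ ], [ A, (1/η)I ]] and ‖u‖²_P = uᵀPu. -/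
/-!
Each PDHG step is a proximal-point step for the saddle operator in the metric `P`. The
subgradient inequalities bound the one-step gap `L(xⁱ⁺¹, λ) - L(x, λⁱ⁺¹)` by
`⟨zⁱ⁺¹ - z, P (zⁱ - zⁱ⁺¹)⟩`, which the three-point identity for `P ⪰ 0` turns into
`(‖z - zⁱ‖²_P - ‖z - zⁱ⁺¹‖²_P) / 2`. These bounds telescope, and Jensen's inequality (convexity
of `L` in `x`, concavity in `λ`) passes from the average of the gaps to the gap at the averages.
`P ⪰ 0` because `|λᵀAx| ≤ ‖A‖₂ ‖x‖ ‖λ‖ ≤ (‖x‖² + ‖λ‖²) / (2η)`.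
-/

open Matrix Finset

/-- The ℓ₂ operator (spectral) norm of a matrix. -/
noncomputable def matrixSpectralNorm {m n : ℕ} (A : Matrix (Fin m) (Fin n) ℝ) : ℝ :=
  ‖LinearMap.toContinuousLinearMap (Matrix.toEuclideanLin A)‖

section Averaging

variable {ι E F : Type*} [AddCommGroup E] [Module ℝ E] [AddCommGroup F] [Module ℝ F]
  {s : Finset ι}

theorem ConvexOn.map_inv_card_smul_sum_le {f : E → ℝ} (hf : ConvexOn ℝ Set.univ f)
    (hs : s.Nonempty) (p : ι → E) :
    f ((#s : ℝ)⁻¹ • ∑ i ∈ s, p i) ≤ (#s : ℝ)⁻¹ * ∑ i ∈ s, f (p i) := by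
  have hw : ∑ _i ∈ s, (#s : ℝ)⁻¹ = 1 := by simp [hs.card_ne_zero]
  simpa [smul_sum, mul_sum] using
    hf.map_sum_le (fun _ _ => by positivity) hw (fun i _ => Set.mem_univ (p i))

theorem ConcaveOn.inv_card_mul_sum_le_map {f : E → ℝ} (hf : ConcaveOn ℝ Set.univ f)
    (hs : s.Nonempty) (p : ι → E) :
    (#s : ℝ)⁻¹ * ∑ i ∈ s, f (p i) ≤ f ((#s : ℝ)⁻¹ • ∑ i ∈ s, p i) := by
  simpa [sum_neg_distrib] using hf.neg.map_inv_card_smul_sum_le hs p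

theorem saddle_gap_average_le (L : E → F → ℝ) (hLx : ∀ l, ConvexOn ℝ Set.univ (L · l))
    (hLl : ∀ x, ConcaveOn ℝ Set.univ (L x)) (hs : s.Nonempty) (xs : ι → E) (ls : ι → F)
    (x : E) (l : F) :
    L ((#s : ℝ)⁻¹ • ∑ i ∈ s, xs i) l - L x ((#s : ℝ)⁻¹ • ∑ i ∈ s, ls i)
      ≤ (#s : ℝ)⁻¹ * ∑ i ∈ s, (L (xs i) l - L x (ls i)) := by
  rw [sum_sub_distrib, mul_sub]
  exact sub_le_sub ((hLx l).map_inv_card_smul_sum_le hs xs)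
    ((hLl x).inv_card_mul_sum_le_map hs ls)

end Averaging

section Lagrangian

variable {ι κ : Type*} [Fintype ι] [Fintype κ] (A : Matrix κ ι ℝ)

theorem convexOn_sub_dotProduct_mulVec_sub {f : (ι → ℝ) → ℝ} (hf : ConvexOn ℝ Set.univ f)
    (l : κ → ℝ) (c : ℝ) : ConvexOn ℝ Set.univ fun x => f x - l ⬝ᵥ (A *ᵥ x) - c := by
  have hlin : ConcaveOn ℝ Set.univ fun x => l ⬝ᵥ (A *ᵥ x) := by
    simp_rw [dotProduct_mulVec]
    exact (dotProductBilin ℝ ℝ (l ᵥ* A)).concaveOn convex_univ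
  exact (hf.sub hlin).add_const (-c) |>.congr fun x _ => by simp [sub_eq_add_neg]

theorem concaveOn_sub_dotProduct_mulVec_sub {g : (κ → ℝ) → ℝ} (hg : ConvexOn ℝ Set.univ g)
    (x : ι → ℝ) (c : ℝ) : ConcaveOn ℝ Set.univ fun l => c - l ⬝ᵥ (A *ᵥ x) - g l := by
  have hlin : ConvexOn ℝ Set.univ fun l : κ → ℝ => l ⬝ᵥ (A *ᵥ x) :=
    (dotProductBilin ℝ ℝ).flip (A *ᵥ x) |>.convexOn convex_univ
  exact (hlin.add hg).neg.add_const c |>.congr fun l _ => by simp; ring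

theorem saddle_gap_le_of_isSubgradAt_s9 {f : (ι → ℝ) → ℝ} {g : (κ → ℝ) → ℝ}
    {x' gf : ι → ℝ} {l' gg : κ → ℝ} (hgf : IsSubgradAt f x' gf) (hgg : IsSubgradAt g l' gg)
    (x : ι → ℝ) (l : κ → ℝ) :
    (f x' - l ⬝ᵥ (A *ᵥ x') - g l) - (f x - l' ⬝ᵥ (A *ᵥ x) - g l')
      ≤ Sum.elim (x' - x) (l' - l) ⬝ᵥ Sum.elim (gf - Aᵀ *ᵥ l') (gg + A *ᵥ x') := by
  have hfx := hgf x
  have hgl := hgg l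
  have hAt : (x' - x) ⬝ᵥ (Aᵀ *ᵥ l') = l' ⬝ᵥ (A *ᵥ (x' - x)) := by
    rw [dotProduct_mulVec, vecMul_transpose, dotProduct_comm]
  rw [sumElim_dotProduct_sumElim, dotProduct_sub _ gf, hAt]
  simp only [dotProduct_sub, sub_dotProduct, dotProduct_add, mulVec_sub] at *
  linarith [dotProduct_comm gf x, dotProduct_comm gf x', dotProduct_comm gg l,
    dotProduct_comm gg l']

end Lagrangian

section ThreePoint

variable {ι : Type*} [Fintype ι] {P : Matrix ι ι ℝ}

theorem Matrix.PosSemidef.dotProduct_mulVec_sub_le (hP : P.PosSemidef) (w u v : ι → ℝ) :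
    (v - w) ⬝ᵥ (P *ᵥ (u - v))
      ≤ ((w - u) ⬝ᵥ (P *ᵥ (w - u)) - (w - v) ⬝ᵥ (P *ᵥ (w - v))) / 2 := by
  have hsymm : ∀ a b : ι → ℝ, a ⬝ᵥ (P *ᵥ b) = b ⬝ᵥ (P *ᵥ a) := fun a b => by
    conv_lhs => rw [← hP.1.eq, conjTranspose_eq_transpose_of_trivial]
    rw [dotProduct_mulVec, vecMul_transpose, dotProduct_comm]
  have hnonneg := hP.dotProduct_mulVec_nonneg (u - v)
  rw [star_trivial] at hnonneg
  simp only [mulVec_sub, sub_dotProduct, dotProduct_sub] at *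
  linarith [hsymm w u, hsymm w v, hsymm u v]

end ThreePoint

section PdhgMatrix

variable {m n : ℕ}

theorem abs_dotProduct_mulVec_le_matrixSpectralNorm (A : Matrix (Fin m) (Fin n) ℝ)
    (a : Fin n → ℝ) (b : Fin m → ℝ) :
    |b ⬝ᵥ (A *ᵥ a)| ≤ matrixSpectralNorm A * (‖WithLp.toLp 2 a‖ * ‖WithLp.toLp 2 b‖) := by
  set T := LinearMap.toContinuousLinearMap (toEuclideanLin A)
  have hinner : b ⬝ᵥ (A *ᵥ a) = inner ℝ (WithLp.toLp 2 b) (T (WithLp.toLp 2 a)) := by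
    simp [T, EuclideanSpace.inner_toLp_toLp, dotProduct_comm]
  calc |b ⬝ᵥ (A *ᵥ a)| ≤ ‖WithLp.toLp 2 b‖ * ‖T (WithLp.toLp 2 a)‖ :=
        hinner ▸ abs_real_inner_le_norm _ _
    _ ≤ ‖WithLp.toLp 2 b‖ * (‖T‖ * ‖WithLp.toLp 2 a‖) := by gcongr; exact T.le_opNorm _
    _ = matrixSpectralNorm A * (‖WithLp.toLp 2 a‖ * ‖WithLp.toLp 2 b‖) := by
        rw [matrixSpectralNorm]; ring

theorem norm_toLp_sq_eq_dotProduct {ι : Type*} [Fintype ι] (a : ι → ℝ) :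
    ‖WithLp.toLp 2 a‖ ^ 2 = a ⬝ᵥ a := by
  rw [EuclideanSpace.real_norm_sq_eq]
  simp [dotProduct, sq]

noncomputable def pdhgMatrix (η : ℝ) (A : Matrix (Fin m) (Fin n) ℝ) :
    Matrix (Fin n ⊕ Fin m) (Fin n ⊕ Fin m) ℝ :=
  fromBlocks ((1/η) • (1 : Matrix (Fin n) (Fin n) ℝ)) Aᵀ A
    ((1/η) • (1 : Matrix (Fin m) (Fin m) ℝ))

theorem sumElim_dotProduct_pdhgMatrix_mulVec (η : ℝ) (A : Matrix (Fin m) (Fin n) ℝ)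
    (a : Fin n → ℝ) (b : Fin m → ℝ) :
    Sum.elim a b ⬝ᵥ (pdhgMatrix η A *ᵥ Sum.elim a b)
      = (a ⬝ᵥ a + b ⬝ᵥ b) / η + 2 * (b ⬝ᵥ (A *ᵥ a)) := by
  have hAt : a ⬝ᵥ (Aᵀ *ᵥ b) = b ⬝ᵥ (A *ᵥ a) := by
    rw [dotProduct_mulVec, vecMul_transpose, dotProduct_comm]
  simp only [pdhgMatrix, fromBlocks_mulVec, Sum.elim_comp_inl, Sum.elim_comp_inr,
    sumElim_dotProduct_sumElim, smul_mulVec, one_mulVec, dotProduct_add, dotProduct_smul,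
    smul_eq_mul, hAt]
  ring

theorem pdhgMatrix_posSemidef {η : ℝ} (hη : 0 < η) {A : Matrix (Fin m) (Fin n) ℝ}
    (hηA : η ≤ 1 / matrixSpectralNorm A) : (pdhgMatrix η A).PosSemidef := by
  refine .of_dotProduct_mulVec_nonneg ?_ fun u => ?_
  · exact .fromBlocks (by simp [IsHermitian]) (by simp) (by simp [IsHermitian])
  obtain ⟨a, b, rfl⟩ : ∃ a b, u = Sum.elim a b := ⟨u ∘ Sum.inl, u ∘ Sum.inr, by simp⟩
  have hηN : η * matrixSpectralNorm A ≤ 1 := by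
    have hN : 0 ≤ matrixSpectralNorm A := norm_nonneg _
    rcases hN.eq_or_lt with h0 | hpos
    · rw [← h0, mul_zero]; exact zero_le_one
    · exact (le_div_iff₀ hpos).mp hηA
  set α := ‖WithLp.toLp 2 a‖
  set β := ‖WithLp.toLp 2 b‖
  have hcross : -(b ⬝ᵥ (A *ᵥ a)) * η ≤ α * β := calc
    -(b ⬝ᵥ (A *ᵥ a)) * η ≤ matrixSpectralNorm A * (α * β) * η := by
      gcongr; exact (neg_le_abs _).trans (abs_dotProduct_mulVec_le_matrixSpectralNorm A a b)
    _ = (η * matrixSpectralNorm A) * (α * β) := by ring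
    _ ≤ α * β := mul_le_of_le_one_left (by positivity) hηN
  rw [star_trivial, sumElim_dotProduct_pdhgMatrix_mulVec, ← norm_toLp_sq_eq_dotProduct a,
    ← norm_toLp_sq_eq_dotProduct b, div_add' _ _ _ hη.ne']
  exact div_nonneg (by nlinarith [sq_nonneg (α - β)]) hη.le

end PdhgMatrix

/-- `O(1/k)` ergodic rate of PDHG for `L(x,λ) = f(x) - λᵀAx - g*(λ)` with
`0 < η ≤ 1/‖A‖₂`. -/
theorem ergodic_rate_pdhg {n m : ℕ} (f : (Fin n → ℝ) → ℝ) (gs : (Fin m → ℝ) → ℝ)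
    (hf : ConvexOn ℝ Set.univ f) (hgs : ConvexOn ℝ Set.univ gs)
    (A : Matrix (Fin m) (Fin n) ℝ) (η : ℝ) (hη : 0 < η) (hηA : η ≤ 1 / matrixSpectralNorm A)
    (L : (Fin n → ℝ) → (Fin m → ℝ) → ℝ)
    (hL : ∀ x lam, L x lam = f x - lam ⬝ᵥ (A *ᵥ x) - gs lam)
    (P : Matrix (Fin n ⊕ Fin m) (Fin n ⊕ Fin m) ℝ)
    (hPdef : P = fromBlocks ((1/η) • (1 : Matrix (Fin n) (Fin n) ℝ)) Aᵀ A
      ((1/η) • (1 : Matrix (Fin m) (Fin m) ℝ)))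
    (xs : ℕ → Fin n → ℝ) (ls : ℕ → Fin m → ℝ)
    (hstep : ∀ k, ∃ gf gg, IsSubgradAt f (xs (k+1)) gf ∧ IsSubgradAt gs (ls (k+1)) gg ∧
      P *ᵥ (Sum.elim (xs k) (ls k) - Sum.elim (xs (k+1)) (ls (k+1)))
        = Sum.elim (gf - Aᵀ *ᵥ ls (k+1)) (gg + A *ᵥ xs (k+1)))
    (k : ℕ) (hk : 1 ≤ k) (x : Fin n → ℝ) (lam : Fin m → ℝ) :
    L ((k : ℝ)⁻¹ • ∑ i ∈ range k, xs (i+1)) lam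
      - L x ((k : ℝ)⁻¹ • ∑ i ∈ range k, ls (i+1))
      ≤ ((Sum.elim x lam - Sum.elim (xs 0) (ls 0))
          ⬝ᵥ (P *ᵥ (Sum.elim x lam - Sum.elim (xs 0) (ls 0)))) / (2 * k) := by
  have hP : P.PosSemidef := hPdef ▸ pdhgMatrix_posSemidef hη hηA
  set D : ℕ → ℝ := fun i => (Sum.elim x lam - Sum.elim (xs i) (ls i))
    ⬝ᵥ (P *ᵥ (Sum.elim x lam - Sum.elim (xs i) (ls i)))
  have hdescent (i : ℕ) : L (xs (i+1)) lam - L x (ls (i+1)) ≤ (D i - D (i+1)) / 2 := by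
    obtain ⟨gf, gg, hgf, hgg, hPstep⟩ := hstep i
    calc L (xs (i+1)) lam - L x (ls (i+1))
        ≤ (Sum.elim (xs (i+1)) (ls (i+1)) - Sum.elim x lam)
          ⬝ᵥ (P *ᵥ (Sum.elim (xs i) (ls i) - Sum.elim (xs (i+1)) (ls (i+1)))) := by
          rw [hL, hL, hPstep, ← Sum.elim_sub_sub]
          exact saddle_gap_le_of_isSubgradAt_s9 A hgf hgg x lam
      _ ≤ (D i - D (i+1)) / 2 := hP.dotProduct_mulVec_sub_le _ _ _
  have htelescope : ∑ i ∈ range k, (L (xs (i+1)) lam - L x (ls (i+1))) ≤ D 0 / 2 := calc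
    _ ≤ ∑ i ∈ range k, (D i - D (i+1)) / 2 := sum_le_sum fun i _ => hdescent i
    _ = (D 0 - D k) / 2 := by rw [← sum_div, sum_range_sub']
    _ ≤ D 0 / 2 := by
      have hDk : 0 ≤ D k := by simpa using hP.dotProduct_mulVec_nonneg _
      linarith
  have haverage := saddle_gap_average_le L
    (fun l => (convexOn_sub_dotProduct_mulVec_sub A hf l (gs l)).congr fun x _ => (hL x l).symm)
    (fun x => (concaveOn_sub_dotProduct_mulVec_sub A hgs x (f x)).congr fun l _ => (hL x l).symm)
    ⟨0, mem_range.2 hk⟩ (fun i => xs (i+1)) (fun i => ls (i+1)) x lam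
  rw [card_range] at haverage
  calc _ ≤ (k : ℝ)⁻¹ * (D 0 / 2) := haverage.trans (by gcongr)
    _ = D 0 / (2 * k) := by ring
end

section
/- Ergodic rate of ADMM: for any η > 0, the ADMM ergodic averages (ȳ^k, x̄^k, λ̄^k) satisfy L(x̄^k, ȳ^k, λ) - L(x, y, λ̄^k) ≤ ‖z - z^0‖²_P / (2k) for every (y, x, λ), where L(x, y, λ) = f(x) + g(y) - λᵀ(Ax + By - b) and P = [[0,0,0],[0, ηAᵀA, -Aᵀ],[0, -A, (1/η)I]]. -/
open Matrix Finset

/-!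
Write `z = (y, x, λ)` and `F(z) = (∂g(y) - Bᵀλ, ∂f(x) - Aᵀλ, Ax + By - b)`. The subgradient
inequalities bound the Lagrangian gap `L(x^{k+1}, y^{k+1}, λ) - L(x, y, λ^{k+1})` by
`⟨z^{k+1} - z, F(z^{k+1})⟩`, and the ADMM step picks the element `P(z^k - z^{k+1})` of
`F(z^{k+1})`. Since `P = η⁻¹ CᵀC` with `C = [0 | ηA | -I]` is positive semidefinite, the
three-point identity bounds this pairing by `(‖z - z^k‖²_P - ‖z - z^{k+1}‖²_P) / 2`, which
telescopes over `k` steps. Finally `L` is convex in `(x, y)` and affine in `λ`, so by Jensen the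
gap at the ergodic averages is at most the average gap.
-/

theorem Matrix.IsSymm.dotProduct_mulVec_comm_s10 {ι R : Type*} [Fintype ι] [CommSemiring R]
    {P : Matrix ι ι R} (hP : P.IsSymm) (a c : ι → R) :
    c ⬝ᵥ (P *ᵥ a) = a ⬝ᵥ (P *ᵥ c) := by
  rw [dotProduct_mulVec, ← mulVec_transpose, hP.eq, dotProduct_comm]

theorem Matrix.PosSemidef.three_point_le {ι : Type*} [Fintype ι] {P : Matrix ι ι ℝ}
    (hP : P.PosSemidef) (u v w : ι → ℝ) :
    (u - w) ⬝ᵥ (P *ᵥ (v - u)) ≤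
      ((w - v) ⬝ᵥ (P *ᵥ (w - v)) - (w - u) ⬝ᵥ (P *ᵥ (w - u))) / 2 := by
  have hc := hP.dotProduct_mulVec_nonneg (v - u)
  rw [star_trivial] at hc
  have hcomm := (isHermitian_iff_isSymm.mp hP.isHermitian).dotProduct_mulVec_comm_s10 (w - u) (v - u)
  rw [show u - w = -(w - u) by abel, show w - v = (w - u) - (v - u) by abel]
  simp only [mulVec_sub, dotProduct_sub, sub_dotProduct, neg_dotProduct] at hcomm hc ⊢
  linarith

section AdmmMatrix

variable {ι μ : Type*} (κ : Type*) [Fintype μ] [DecidableEq μ]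

noncomputable def admmMatrix (η : ℝ) (A : Matrix μ ι ℝ) : Matrix (κ ⊕ (ι ⊕ μ)) (κ ⊕ (ι ⊕ μ)) ℝ :=
  fromBlocks 0 0 0 (fromBlocks (η • (Aᵀ * A)) (-Aᵀ) (-A) ((1 / η) • 1))

theorem admmMatrix_eq_smul_transpose_mul {η : ℝ} (hη : η ≠ 0) (A : Matrix μ ι ℝ) :
    admmMatrix κ η A = (1 / η) • ((fromCols (0 : Matrix μ κ ℝ) (fromCols (η • A) (-1)))ᵀ *
      fromCols 0 (fromCols (η • A) (-1))) := by
  simp only [admmMatrix, transpose_fromCols, fromRows_mul_fromCols, fromBlocks_smul]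
  congr 1 <;> simp [hη, smul_smul]

theorem posSemidef_admmMatrix [Finite ι] [Finite κ] {η : ℝ} (hη : 0 < η) (A : Matrix μ ι ℝ) :
    (admmMatrix κ η A).PosSemidef := by
  rw [admmMatrix_eq_smul_transpose_mul κ hη.ne']
  exact (posSemidef_conjTranspose_mul_self _).smul (by positivity)

end AdmmMatrix

section Lagrangian

variable {ι κ μ : Type*} [Fintype ι] [Fintype κ] [Fintype μ]
  (f : (ι → ℝ) → ℝ) (g : (κ → ℝ) → ℝ) (A : Matrix μ ι ℝ) (B : Matrix μ κ ℝ) (b : μ → ℝ)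

def lagrangian (x : ι → ℝ) (y : κ → ℝ) (lam : μ → ℝ) : ℝ :=
  f x + g y - lam ⬝ᵥ (A *ᵥ x + B *ᵥ y - b)

variable {f g A B b}

theorem lagrangian_sub_le_dotProduct {x' gf : ι → ℝ} {y' gg : κ → ℝ}
    (hgf : IsSubgradAt f x' gf) (hgg : IsSubgradAt g y' gg)
    (x : ι → ℝ) (y : κ → ℝ) (lam lam' : μ → ℝ) :
    lagrangian f g A B b x' y' lam - lagrangian f g A B b x y lam' ≤
      (Sum.elim y' (Sum.elim x' lam') - Sum.elim y (Sum.elim x lam)) ⬝ᵥ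
        Sum.elim (gg - Bᵀ *ᵥ lam') (Sum.elim (gf - Aᵀ *ᵥ lam') (A *ᵥ x' + B *ᵥ y' - b)) := by
  have hf := hgf x
  have hg := hgg y
  have hA : (x' - x) ⬝ᵥ (Aᵀ *ᵥ lam') = lam' ⬝ᵥ (A *ᵥ x' - A *ᵥ x) := by
    rw [mulVec_transpose, dotProduct_comm, ← dotProduct_mulVec, mulVec_sub]
  have hB : (y' - y) ⬝ᵥ (Bᵀ *ᵥ lam') = lam' ⬝ᵥ (B *ᵥ y' - B *ᵥ y) := by
    rw [mulVec_transpose, dotProduct_comm, ← dotProduct_mulVec, mulVec_sub]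
  rw [dotProduct_comm] at hf hg
  simp only [← Sum.elim_sub_sub, sumElim_dotProduct_sumElim, dotProduct_sub, hA, hB, lagrangian]
  simp only [sub_dotProduct, dotProduct_add] at hf hg ⊢
  linarith

theorem lagrangian_sum_smul_sub_le {α : Type*} (hf : ConvexOn ℝ Set.univ f)
    (hg : ConvexOn ℝ Set.univ g) {s : Finset α} {w : α → ℝ} (hw₀ : ∀ i ∈ s, 0 ≤ w i)
    (hw₁ : ∑ i ∈ s, w i = 1) (xs : α → ι → ℝ) (ys : α → κ → ℝ) (ls : α → μ → ℝ)
    (x : ι → ℝ) (y : κ → ℝ) (lam : μ → ℝ) :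
    lagrangian f g A B b (∑ i ∈ s, w i • xs i) (∑ i ∈ s, w i • ys i) lam -
        lagrangian f g A B b x y (∑ i ∈ s, w i • ls i) ≤
      ∑ i ∈ s, w i * (lagrangian f g A B b (xs i) (ys i) lam -
        lagrangian f g A B b x y (ls i)) := by
  have hfx := hf.map_sum_le hw₀ hw₁ (p := xs) fun _ _ => Set.mem_univ _
  have hgy := hg.map_sum_le hw₀ hw₁ (p := ys) fun _ _ => Set.mem_univ _
  have hprimal : lam ⬝ᵥ (A *ᵥ ∑ i ∈ s, w i • xs i + B *ᵥ ∑ i ∈ s, w i • ys i - b) =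
      ∑ i ∈ s, w i * lam ⬝ᵥ (A *ᵥ xs i + B *ᵥ ys i - b) := by
    simp only [← smul_eq_mul, ← dotProduct_smul, ← dotProduct_sum, smul_sub, smul_add,
      sum_sub_distrib, sum_add_distrib, ← sum_smul, hw₁, one_smul, mulVec_sum, mulVec_smul]
  have hdual : (∑ i ∈ s, w i • ls i) ⬝ᵥ (A *ᵥ x + B *ᵥ y - b) =
      ∑ i ∈ s, w i * ls i ⬝ᵥ (A *ᵥ x + B *ᵥ y - b) := by
    simp only [sum_dotProduct, smul_dotProduct, smul_eq_mul]
  simp only [smul_eq_mul] at hfx hgy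
  simp only [lagrangian, hprimal, hdual, mul_sub, mul_add, sum_sub_distrib, sum_add_distrib,
    ← sum_mul, hw₁, one_mul]
  linarith

end Lagrangian

/-- `O(1/k)` ergodic rate of ADMM for `L(x,y,λ) = f(x) + g(y) - λᵀ(Ax+By-b)`. -/
theorem ergodic_rate_admm {p n m : ℕ} (f : (Fin n → ℝ) → ℝ) (g : (Fin p → ℝ) → ℝ)
    (hf : ConvexOn ℝ Set.univ f) (hg : ConvexOn ℝ Set.univ g)
    (A : Matrix (Fin m) (Fin n) ℝ) (B : Matrix (Fin m) (Fin p) ℝ) (b : Fin m → ℝ)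
    (η : ℝ) (hη : 0 < η)
    (L : (Fin n → ℝ) → (Fin p → ℝ) → (Fin m → ℝ) → ℝ)
    (hL : ∀ x y lam, L x y lam = f x + g y - lam ⬝ᵥ (A *ᵥ x + B *ᵥ y - b))
    (P : Matrix (Fin p ⊕ (Fin n ⊕ Fin m)) (Fin p ⊕ (Fin n ⊕ Fin m)) ℝ)
    (hPdef : P = fromBlocks (0 : Matrix (Fin p) (Fin p) ℝ)
      (0 : Matrix (Fin p) (Fin n ⊕ Fin m) ℝ) (0 : Matrix (Fin n ⊕ Fin m) (Fin p) ℝ)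
      (fromBlocks (η • (Aᵀ * A)) (-Aᵀ) (-A) ((1/η) • (1 : Matrix (Fin m) (Fin m) ℝ))))
    (ys : ℕ → Fin p → ℝ) (xs : ℕ → Fin n → ℝ) (ls : ℕ → Fin m → ℝ)
    (hstep : ∀ k, ∃ gg gf, IsSubgradAt g (ys (k+1)) gg ∧ IsSubgradAt f (xs (k+1)) gf ∧
      P *ᵥ (Sum.elim (ys k) (Sum.elim (xs k) (ls k))
          - Sum.elim (ys (k+1)) (Sum.elim (xs (k+1)) (ls (k+1))))
        = Sum.elim (gg - Bᵀ *ᵥ ls (k+1))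
            (Sum.elim (gf - Aᵀ *ᵥ ls (k+1)) (A *ᵥ xs (k+1) + B *ᵥ ys (k+1) - b)))
    (k : ℕ) (hk : 1 ≤ k) (x : Fin n → ℝ) (y : Fin p → ℝ) (lam : Fin m → ℝ) :
    L ((k : ℝ)⁻¹ • ∑ i ∈ range k, xs (i+1)) ((k : ℝ)⁻¹ • ∑ i ∈ range k, ys (i+1)) lam
      - L x y ((k : ℝ)⁻¹ • ∑ i ∈ range k, ls (i+1))
      ≤ ((Sum.elim y (Sum.elim x lam) - Sum.elim (ys 0) (Sum.elim (xs 0) (ls 0)))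
          ⬝ᵥ (P *ᵥ (Sum.elim y (Sum.elim x lam)
            - Sum.elim (ys 0) (Sum.elim (xs 0) (ls 0))))) / (2 * k) := by
  obtain rfl : L = lagrangian f g A B b := funext₃ hL
  have hP : P.PosSemidef := hPdef ▸ posSemidef_admmMatrix (Fin p) hη A
  set z : ℕ → Fin p ⊕ (Fin n ⊕ Fin m) → ℝ := fun i => Sum.elim (ys i) (Sum.elim (xs i) (ls i))
  set w := Sum.elim y (Sum.elim x lam)
  set D : ℕ → ℝ := fun i => (w - z i) ⬝ᵥ (P *ᵥ (w - z i))
  set gap : ℕ → ℝ := fun i =>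
    lagrangian f g A B b (xs (i + 1)) (ys (i + 1)) lam - lagrangian f g A B b x y (ls (i + 1))
  have hdescent : ∀ i, gap i ≤ (D i - D (i + 1)) / 2 := by
    intro i
    obtain ⟨gg, gf, hgg, hgf, hPz⟩ := hstep i
    calc gap i ≤ (z (i + 1) - w) ⬝ᵥ (P *ᵥ (z i - z (i + 1))) := by
          rw [hPz]; exact lagrangian_sub_le_dotProduct hgf hgg x y lam (ls (i + 1))
      _ ≤ (D i - D (i + 1)) / 2 := hP.three_point_le _ _ _
  have hsum : ∑ i ∈ range k, gap i ≤ D 0 / 2 := by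
    have hDk : 0 ≤ D k := by simpa only [star_trivial] using hP.dotProduct_mulVec_nonneg (w - z k)
    calc ∑ i ∈ range k, gap i ≤ ∑ i ∈ range k, (D i - D (i + 1)) / 2 :=
          sum_le_sum fun i _ => hdescent i
      _ = (D 0 - D k) / 2 := by rw [← sum_div, sum_range_sub']
      _ ≤ D 0 / 2 := by linarith
  have hk' : (0 : ℝ) < k := by exact_mod_cast hk
  have hw₁ : ∑ _i ∈ range k, (k : ℝ)⁻¹ = 1 := by simp [hk'.ne']
  calc _ ≤ ∑ i ∈ range k, (k : ℝ)⁻¹ * gap i := by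
        simpa only [smul_sum] using lagrangian_sum_smul_sub_le hf hg (fun _ _ => by positivity) hw₁
          (fun i => xs (i + 1)) (fun i => ys (i + 1)) (fun i => ls (i + 1)) x y lam
    _ ≤ (k : ℝ)⁻¹ * (D 0 / 2) := by rw [← mul_sum]; gcongr
    _ = D 0 / (2 * k) := by ring
end

section
/- Key approximation inequality for linearized PDHG: if f and g* are convex and L-smooth, and L(x,λ) = f(x) - λᵀAx - g*(λ), then for iterates z^k = (x^k, λ^k) and F^{k+1} = (∇f(x^k) - Aᵀλ^{k+1}, ∇g*(λ^k) + Ax^{k+1}), for any z = (x, λ): L(x^{k+1}, λ) - L(x, λ^{k+1}) ≤ ⟨F^{k+1}, z^{k+1} - z⟩ + (L/2)‖z^k - z^{k+1}‖². -/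
/-!
Split the gap as `[f(x^{k+1}) - f(x)] + [g*(λ^{k+1}) - g*(λ)] + [λ^{k+1}ᵀAx - λᵀAx^{k+1}]`.
The descent lemma at `x^k` bounds `f(x^{k+1})` from above and the gradient inequality at `x^k`
bounds `f(x)` from below, both by linearizations at the same point, so their difference is
`∇f(x^k)ᵀ(x^{k+1} - x)` plus the smoothness term; likewise for `g*`. The bilinear terms are
exactly what the coupling parts `-Aᵀλ^{k+1}` and `Ax^{k+1}` of `F^{k+1}` contribute.
-/

open Matrix

theorem Sum.elim_sub_elim {α β γ : Type*} [Sub γ] (f f' : α → γ) (g g' : β → γ) :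
    Sum.elim f g - Sum.elim f' g' = Sum.elim (f - f') (g - g') := by
  funext i
  cases i <;> rfl

theorem Matrix.sub_dotProduct_sub_comm {ι R : Type*} [Fintype ι] [CommRing R] (v w : ι → R) :
    (v - w) ⬝ᵥ (v - w) = (w - v) ⬝ᵥ (w - v) := by
  rw [← neg_sub w v, neg_dotProduct_neg]

theorem sub_le_dotProduct_add_of_convex_of_smooth {ι : Type*} [Fintype ι]
    (f : (ι → ℝ) → ℝ) (Df : (ι → ℝ) → ι → ℝ) (Lc : ℝ)
    (hconv : ∀ x y, f x + Df x ⬝ᵥ (y - x) ≤ f y)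
    (hsmooth : ∀ x y, f y ≤ f x + Df x ⬝ᵥ (y - x) + (Lc / 2) * ((y - x) ⬝ᵥ (y - x)))
    (x₀ x₁ x : ι → ℝ) :
    f x₁ - f x ≤ Df x₀ ⬝ᵥ (x₁ - x) + (Lc / 2) * ((x₀ - x₁) ⬝ᵥ (x₀ - x₁)) := by
  have hsplit : Df x₀ ⬝ᵥ (x₁ - x) = Df x₀ ⬝ᵥ (x₁ - x₀) - Df x₀ ⬝ᵥ (x - x₀) := by
    rw [← dotProduct_sub, sub_sub_sub_cancel_right]
  rw [hsplit, sub_dotProduct_sub_comm]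
  linarith [hsmooth x₀ x₁, hconv x₀ x]

theorem Matrix.neg_transpose_mulVec_dotProduct_add_mulVec_dotProduct {m n R : Type*}
    [Fintype m] [Fintype n] [CommRing R] (A : Matrix m n R) (x₁ x : n → R) (μ₁ μ : m → R) :
    -(Aᵀ *ᵥ μ₁) ⬝ᵥ (x₁ - x) + (A *ᵥ x₁) ⬝ᵥ (μ₁ - μ) = μ₁ ⬝ᵥ (A *ᵥ x) - μ ⬝ᵥ (A *ᵥ x₁) := by
  simp only [mulVec_transpose, ← dotProduct_mulVec, dotProduct_sub, sub_dotProduct, neg_dotProduct,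
    dotProduct_comm (A *ᵥ x₁)]
  ring

/-- Key approximation inequality for linearized PDHG: with
`F^{k+1} = (∇f(x^k) - Aᵀλ^{k+1}, ∇g*(λ^k) + Ax^{k+1})`,
`L(x^{k+1},λ) - L(x,λ^{k+1}) ≤ ⟨F^{k+1}, z^{k+1} - z⟩ + (L/2)‖z^k - z^{k+1}‖²`. -/
theorem linearized_pdhg_gap_bound {n m : ℕ} (f : (Fin n → ℝ) → ℝ)
    (gs : (Fin m → ℝ) → ℝ) (Df : (Fin n → ℝ) → (Fin n → ℝ))
    (Dg : (Fin m → ℝ) → (Fin m → ℝ)) (Lc : ℝ)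
    (hfconv : ∀ x y, f x + Df x ⬝ᵥ (y - x) ≤ f y)
    (hfsmooth : ∀ x y, f y ≤ f x + Df x ⬝ᵥ (y - x) + (Lc/2) * ((y - x) ⬝ᵥ (y - x)))
    (hgconv : ∀ u v, gs u + Dg u ⬝ᵥ (v - u) ≤ gs v)
    (hgsmooth : ∀ u v, gs v ≤ gs u + Dg u ⬝ᵥ (v - u) + (Lc/2) * ((v - u) ⬝ᵥ (v - u)))
    (A : Matrix (Fin m) (Fin n) ℝ)
    (L : (Fin n → ℝ) → (Fin m → ℝ) → ℝ)
    (hL : ∀ x lam, L x lam = f x - lam ⬝ᵥ (A *ᵥ x) - gs lam)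
    (xk xk1 : Fin n → ℝ) (lk lk1 : Fin m → ℝ) (x : Fin n → ℝ) (lam : Fin m → ℝ) :
    L xk1 lam - L x lk1
      ≤ (Sum.elim (Df xk - Aᵀ *ᵥ lk1) (Dg lk + A *ᵥ xk1))
          ⬝ᵥ (Sum.elim xk1 lk1 - Sum.elim x lam)
        + (Lc/2) * ((Sum.elim xk lk - Sum.elim xk1 lk1)
            ⬝ᵥ (Sum.elim xk lk - Sum.elim xk1 lk1)) := by
  have hprimal := sub_le_dotProduct_add_of_convex_of_smooth f Df Lc hfconv hfsmooth xk xk1 x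
  have hdual := sub_le_dotProduct_add_of_convex_of_smooth gs Dg Lc hgconv hgsmooth lk lk1 lam
  have hcoupling := neg_transpose_mulVec_dotProduct_add_mulVec_dotProduct A xk1 x lk1 lam
  simp only [hL, Sum.elim_sub_elim, sumElim_dotProduct_sumElim, sub_eq_add_neg (Df xk),
    add_dotProduct]
  linarith
end
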